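/- arXiv:2409.03321 — 5 statements merged into one kernel-verified Lean document; each statement's English description precedes it below -/
import Mathlib

section
/- Anisotropic angle comparison principle: Let F be a smooth Minkowski norm on ℝ^{n+1} with Cahn-Hoffman map Φ = DF|_{𝕊ⁿ}. If x, z ∈ 𝕊ⁿ are distinct points and y ∈ 𝕊ⁿ lies on a length-minimizing geodesic of 𝕊ⁿ joining x and z, then ⟨Φ(x), z⟩ ≤ ⟨Φ(y), z⟩, with equality if and only if x = y. -/
open MeasureTheory Metric Real Filter

noncomputable section

abbrev Euc (n : ℕ) := EuclideanSpace ℝ (Fin (n + 1))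

structure IsMinkowskiNorm (n : ℕ) (F : Euc n → ℝ) : Prop where
  zero : F 0 = 0
  pos : ∀ ξ : Euc n, ξ ≠ 0 → 0 < F ξ
  homog : ∀ t : ℝ, 0 < t → ∀ ξ : Euc n, F (t • ξ) = t * F ξ
  smooth : ContDiffOn ℝ (⊤ : ℕ∞) F {(0 : Euc n)}ᶜ
  conv : ∀ ξ : Euc n, ξ ≠ 0 → ∀ v : Euc n, v ≠ 0 →
    0 < fderiv ℝ (fun y => fderiv ℝ (fun x => F x ^ 2 / 2) y v) ξ v

/-- The dual Minkowski norm `F^o(x) = sup{⟨x,z⟩/F(z) : z ∈ 𝕊ⁿ}`. -/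
def dualNorm {n : ℕ} (F : Euc n → ℝ) (x : Euc n) : ℝ :=
  sSup ((fun z => (inner ℝ x z : ℝ) / F z) '' sphere (0 : Euc n) 1)

/-- The Cahn-Hoffman map `Φ(z) = DF(z)`, realized as the gradient of `F`. -/
def CH {n : ℕ} (F : Euc n → ℝ) (z : Euc n) : Euc n := gradient F z

namespace MinkAux

variable {n : ℕ} {F : Euc n → ℝ}

lemma contDiffAt (hF : IsMinkowskiNorm n F) {x : Euc n} (hx : x ≠ 0) :
    ContDiffAt ℝ (⊤ : ℕ∞) F x :=
  hF.smooth.contDiffAt (isOpen_compl_singleton.mem_nhds hx)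

lemma diffAt (hF : IsMinkowskiNorm n F) {x : Euc n} (hx : x ≠ 0) :
    DifferentiableAt ℝ F x :=
  (contDiffAt hF hx).differentiableAt (by simp)

lemma euler (hF : IsMinkowskiNorm n F) {x : Euc n} (hx : x ≠ 0) :
    fderiv ℝ F x x = F x := by
  have hd : HasFDerivAt F (fderiv ℝ F x) x := (diffAt hF hx).hasFDerivAt
  have hc : HasDerivAt (fun t : ℝ => t • x) ((1:ℝ) • x) 1 :=
    (hasDerivAt_id (1:ℝ)).smul_const x
  have h1 : HasDerivAt (fun t : ℝ => F (t • x)) (fderiv ℝ F x ((1:ℝ) • x)) 1 :=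
    hd.comp_hasDerivAt_of_eq 1 hc (one_smul ℝ x).symm
  have h2 : HasDerivAt (fun t : ℝ => F (t • x)) (F x) 1 := by
    have heq : (fun t : ℝ => F (t • x)) =ᶠ[nhds 1] fun t : ℝ => t * F x := by
      filter_upwards [eventually_gt_nhds zero_lt_one] with t ht
      exact hF.homog t ht x
    have hb : HasDerivAt (fun t : ℝ => t * F x) (F x) 1 := by
      simpa using (hasDerivAt_id (1:ℝ)).mul_const (F x)
    exact hb.congr_of_eventuallyEq heq
  have := h1.unique h2
  simpa [one_smul] using this

lemma fderiv_homog (hF : IsMinkowskiNorm n F) {x : Euc n} (hx : x ≠ 0)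
    {c : ℝ} (hc : 0 < c) : fderiv ℝ F (c • x) = fderiv ℝ F x := by
  have hcx : c • x ≠ 0 := smul_ne_zero hc.ne' hx
  have hd : HasFDerivAt F (fderiv ℝ F (c • x)) (c • x) := (diffAt hF hcx).hasFDerivAt
  have hsm : HasFDerivAt (fun ξ : Euc n => c • ξ)
      (c • ContinuousLinearMap.id ℝ (Euc n)) x := (hasFDerivAt_id x).const_smul c
  have hcomp : HasFDerivAt (F ∘ fun ξ : Euc n => c • ξ)
      ((fderiv ℝ F (c • x)).comp (c • ContinuousLinearMap.id ℝ (Euc n))) x :=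
    hd.comp x hsm
  have h2 : HasFDerivAt (fun ξ : Euc n => c * F ξ) (c • fderiv ℝ F x) x :=
    (diffAt hF hx).hasFDerivAt.const_mul c
  have hfun : (F ∘ fun ξ : Euc n => c • ξ) = fun ξ : Euc n => c * F ξ :=
    funext fun ξ => hF.homog c hc ξ
  rw [hfun] at hcomp
  have h3 := hcomp.unique h2
  have h4 : c • fderiv ℝ F (c • x) = c • fderiv ℝ F x := by
    rw [← h3]; ext v; simp [mul_comm]
  exact smul_right_injective (Euc n →L[ℝ] ℝ) hc.ne' h4

lemma hasFDeriv_sq (hF : IsMinkowskiNorm n F) {x : Euc n} (hx : x ≠ 0) :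
    HasFDerivAt (fun ξ : Euc n => F ξ ^ 2 / 2) (F x • fderiv ℝ F x) x := by
  have h1 : HasDerivAt (fun t : ℝ => t ^ 2 / 2) (F x) (F x) := by
    have := (hasDerivAt_pow 2 (F x)).div_const 2
    simpa using this
  have := h1.comp_hasFDerivAt x (diffAt hF hx).hasFDerivAt
  exact this

lemma strict_conv (hF : IsMinkowskiNorm n F) {p q : Euc n} (hpq : p ≠ q)
    (hseg : ∀ t : ℝ, t ∈ Set.Icc (0:ℝ) 1 → p + t • (q - p) ≠ 0) :
    fderiv ℝ (fun ξ : Euc n => F ξ ^ 2 / 2) p (q - p) < F q ^ 2 / 2 - F p ^ 2 / 2 := by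
  set v : Euc n := q - p with hv
  have hv0 : v ≠ 0 := sub_ne_zero.2 (Ne.symm hpq)
  set c : ℝ → Euc n := fun t => p + t • v with hcdef
  have hcd : ∀ t : ℝ, HasDerivAt c v t := by
    intro t
    have := ((hasDerivAt_id t).smul_const v).const_add p
    rw [one_smul] at this; exact this
  have hGd : ∀ u : Euc n, u ≠ 0 →
      HasFDerivAt (fun ξ : Euc n => F ξ ^ 2 / 2) (F u • fderiv ℝ F u) u :=
    fun u hu => hasFDeriv_sq hF hu
  -- ψ
  set ψ : Euc n → ℝ := fun u => fderiv ℝ (fun ξ : Euc n => F ξ ^ 2 / 2) u v with hψ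
  have hψdiff : ∀ u : Euc n, u ≠ 0 → DifferentiableAt ℝ ψ u := by
    intro u hu
    have hG : ContDiffAt ℝ (⊤ : ℕ∞) (fun ξ : Euc n => F ξ ^ 2 / 2) u :=
      ((contDiffAt hF hu).pow 2).div_const 2
    have h1 : ContDiffAt ℝ 1 (fderiv ℝ (fun ξ : Euc n => F ξ ^ 2 / 2)) u :=
      hG.fderiv_right (WithTop.coe_le_coe.mpr le_top)
    exact ((ContinuousLinearMap.apply ℝ ℝ v).differentiableAt).comp u
      (h1.differentiableAt one_ne_zero)
  have hhd : ∀ t : ℝ, c t ≠ 0 → HasDerivAt (fun s => F (c s) ^ 2 / 2) (ψ (c t)) t := by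
    intro t ht
    have h := (hGd (c t) ht).comp_hasDerivAt t (hcd t)
    have : (F (c t) • fderiv ℝ F (c t)) v
        = fderiv ℝ (fun ξ : Euc n => F ξ ^ 2 / 2) (c t) v := by
      rw [(hGd (c t) ht).fderiv]
    rw [this] at h; exact h
  have hψd : ∀ t : ℝ, c t ≠ 0 →
      HasDerivAt (fun s => ψ (c s)) (fderiv ℝ ψ (c t) v) t := by
    intro t ht
    exact (hψdiff (c t) ht).hasFDerivAt.comp_hasDerivAt t (hcd t)
  have hc0 : c 0 = p := by simp [hcdef]
  have hc1 : c 1 = q := by simp [hcdef, hv]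
  -- first MVT
  obtain ⟨t₀, ht₀, hslope⟩ := exists_hasDerivAt_eq_slope (fun s => F (c s) ^ 2 / 2)
    (fun t => ψ (c t)) zero_lt_one
    (fun t ht => (hhd t (hseg t ht)).continuousAt.continuousWithinAt)
    (fun t ht => hhd t (hseg t (Set.mem_Icc_of_Ioo ht)))
  rw [hc0, hc1] at hslope
  have hslope' : ψ (c t₀) = F q ^ 2 / 2 - F p ^ 2 / 2 := by
    rw [hslope]; ring
  -- second MVT on [0, t₀]
  have hsub : Set.Icc (0:ℝ) t₀ ⊆ Set.Icc (0:ℝ) 1 :=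
    Set.Icc_subset_Icc le_rfl ht₀.2.le
  obtain ⟨t₁, ht₁, hslope2⟩ := exists_hasDerivAt_eq_slope (fun s => ψ (c s))
    (fun t => fderiv ℝ ψ (c t) v) ht₀.1
    (fun t ht => (hψd t (hseg t (hsub ht))).continuousAt.continuousWithinAt)
    (fun t ht => hψd t (hseg t (hsub (Set.mem_Icc_of_Ioo ht))))
  have hposd : 0 < fderiv ℝ ψ (c t₁) v := by
    have hct₁ : c t₁ ≠ 0 := hseg t₁ (hsub (Set.mem_Icc_of_Ioo ht₁))
    exact hF.conv (c t₁) hct₁ v hv0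
  rw [hslope2] at hposd
  have : ψ (c 0) < ψ (c t₀) := by
    have ht₀pos : (0:ℝ) < t₀ := ht₀.1
    rw [sub_zero] at hposd
    have h8 := mul_pos hposd ht₀pos
    rw [div_mul_cancel₀ _ ht₀pos.ne'] at h8
    linarith
  rw [hc0, hslope'] at this
  exact this

lemma support_lt (hF : IsMinkowskiNorm n F) {x y : Euc n} (hx : x ≠ 0) (hy : y ≠ 0)
    (h : ∀ μ : ℝ, 0 < μ → y ≠ μ • x) : fderiv ℝ F x y < F y := by
  have hFx := hF.pos x hx
  have hFy := hF.pos y hy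
  by_cases hcol : ∃ μ : ℝ, y = μ • x
  · obtain ⟨μ, rfl⟩ := hcol
    have hμ0 : μ ≠ 0 := by rintro rfl; simp at hy
    have hμ : μ < 0 := by
      rcases lt_trichotomy μ 0 with h' | h' | h'
      · exact h'
      · exact absurd h' hμ0
      · exact absurd rfl (h μ h')
    have heval : fderiv ℝ F x (μ • x) = μ * F x := by
      rw [(fderiv ℝ F x).map_smul, euler hF hx, smul_eq_mul]
    rw [heval]
    exact lt_trans (mul_neg_of_neg_of_pos hμ hFx) hFy
  · push_neg at hcol
    set lam : ℝ := F y / F x with hlam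
    have hlam0 : 0 < lam := div_pos hFy hFx
    set p : Euc n := lam • x with hp
    have hFp : F p = F y := by
      rw [hp, hF.homog lam hlam0, hlam]; field_simp
    have hp0 : p ≠ 0 := smul_ne_zero hlam0.ne' hx
    have hpq : p ≠ y := fun hh => hcol lam hh.symm
    have hseg : ∀ t : ℝ, t ∈ Set.Icc (0:ℝ) 1 → p + t • (y - p) ≠ 0 := by
      intro t ht hzero
      rcases eq_or_ne t 0 with rfl | ht0
      · simp at hzero; exact hp0 hzero
      · have htpos : 0 < t := lt_of_le_of_ne ht.1 (Ne.symm ht0)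
        apply hcol (((t - 1) * lam) / t)
        have hy' : t • y = ((t - 1) * lam) • x := by
          have h2 : t • y = (t - 1) • p := by linear_combination (norm := module) hzero
          rw [h2, hp, smul_smul]
        have h3 := congrArg (fun w : Euc n => (t⁻¹ : ℝ) • w) hy'
        simp only [smul_smul, inv_mul_cancel₀ ht0, one_smul] at h3
        rw [h3, div_eq_inv_mul]
    have hs := strict_conv hF hpq hseg
    have hGp : fderiv ℝ (fun ξ : Euc n => F ξ ^ 2 / 2) p = F p • fderiv ℝ F p :=
      (hasFDeriv_sq hF hp0).fderiv
    have hfp : fderiv ℝ F p = fderiv ℝ F x := by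
      rw [hp]; exact fderiv_homog hF hx hlam0
    have hx_eval : fderiv ℝ F x p = F y := by
      rw [hp, (fderiv ℝ F x).map_smul, smul_eq_mul, euler hF hx, hlam]
      field_simp
    rw [hGp, hfp, hFp] at hs
    have h5 : F y * (fderiv ℝ F x y - F y) < 0 := by
      have h6 : (F y • fderiv ℝ F x) (y - p) = F y * (fderiv ℝ F x y - F y) := by
        rw [ContinuousLinearMap.smul_apply, map_sub, hx_eval, smul_eq_mul]
      rw [h6] at hs
      linarith
    nlinarith

end MinkAux

set_option maxHeartbeats 1000000 in
open MinkAux in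
/-- Anisotropic angle comparison principle. `y` lies on a length-minimizing geodesic of the
unit sphere joining `x` and `z`, expressed via the spherical (geodesic) distance
`d(a,b) = arccos ⟨a,b⟩`. -/
theorem anisotropic_angle_comparison {n : ℕ} (F : Euc n → ℝ)
    (hF : IsMinkowskiNorm n F) (x y z : Euc n)
    (hx : x ∈ sphere (0 : Euc n) 1) (hy : y ∈ sphere (0 : Euc n) 1)
    (hz : z ∈ sphere (0 : Euc n) 1) (hxz : x ≠ z)
    (hgeo : Real.arccos (inner ℝ x y : ℝ) + Real.arccos (inner ℝ y z : ℝ)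
      = Real.arccos (inner ℝ x z : ℝ)) :
    (inner ℝ (CH F x) z : ℝ) ≤ (inner ℝ (CH F y) z : ℝ) ∧
    ((inner ℝ (CH F x) z : ℝ) = (inner ℝ (CH F y) z : ℝ) ↔ x = y) := by
  have hx1 : ‖x‖ = 1 := mem_sphere_zero_iff_norm.mp hx
  have hy1 : ‖y‖ = 1 := mem_sphere_zero_iff_norm.mp hy
  have hz1 : ‖z‖ = 1 := mem_sphere_zero_iff_norm.mp hz
  have hx0 : x ≠ 0 := by intro h; rw [h, norm_zero] at hx1; norm_num at hx1
  have hy0 : y ≠ 0 := by intro h; rw [h, norm_zero] at hy1; norm_num at hy1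
  have hz0 : z ≠ 0 := by intro h; rw [h, norm_zero] at hz1; norm_num at hz1
  have hgr : ∀ w : Euc n, (inner ℝ (CH F w) z : ℝ) = fderiv ℝ F w z := by
    intro w
    simp [CH, gradient, InnerProductSpace.toDual_symm_apply]
  by_cases hxy : x = y
  · subst hxy
    exact ⟨le_rfl, ⟨fun _ => rfl, fun _ => rfl⟩⟩
  have hlt : fderiv ℝ F x z < fderiv ℝ F y z := by
    have hxybd := abs_le.mp (by
      have := abs_real_inner_le_norm x y
      rwa [hx1, hy1, mul_one] at this : |(inner ℝ x y : ℝ)| ≤ 1)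
    have hyzbd := abs_le.mp (by
      have := abs_real_inner_le_norm y z
      rwa [hy1, hz1, mul_one] at this : |(inner ℝ y z : ℝ)| ≤ 1)
    have hxzbd := abs_le.mp (by
      have := abs_real_inner_le_norm x z
      rwa [hx1, hz1, mul_one] at this : |(inner ℝ x z : ℝ)| ≤ 1)
    set a := Real.arccos (inner ℝ x y : ℝ) with ha
    set b := Real.arccos (inner ℝ y z : ℝ) with hb
    have hca : Real.cos a = (inner ℝ x y : ℝ) := Real.cos_arccos hxybd.1 hxybd.2
    have hcb : Real.cos b = (inner ℝ y z : ℝ) := Real.cos_arccos hyzbd.1 hyzbd.2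
    have hcab : Real.cos (a + b) = (inner ℝ x z : ℝ) := by
      rw [hgeo]; exact Real.cos_arccos hxzbd.1 hxzbd.2
    have ha0 : 0 ≤ a := Real.arccos_nonneg _
    have haπ : a ≤ π := Real.arccos_le_pi _
    have hb0 : 0 ≤ b := Real.arccos_nonneg _
    have hbπ : b ≤ π := Real.arccos_le_pi _
    have hab0 : 0 ≤ a + b := by rw [hgeo]; exact Real.arccos_nonneg _
    have habπ : a + b ≤ π := by rw [hgeo]; exact Real.arccos_le_pi _
    have hsa0 : 0 ≤ Real.sin a := Real.sin_nonneg_of_nonneg_of_le_pi ha0 haπ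
    have hsb0 : 0 ≤ Real.sin b := Real.sin_nonneg_of_nonneg_of_le_pi hb0 hbπ
    have hsab0 : 0 ≤ Real.sin (a + b) := Real.sin_nonneg_of_nonneg_of_le_pi hab0 habπ
    have key : Real.sin a • z + Real.sin b • x = Real.sin (a + b) • y := by
      have hzz : (inner ℝ z z : ℝ) = 1 := by
        rw [real_inner_self_eq_norm_mul_norm, hz1]; norm_num
      have hxx : (inner ℝ x x : ℝ) = 1 := by
        rw [real_inner_self_eq_norm_mul_norm, hx1]; norm_num
      have hyy : (inner ℝ y y : ℝ) = 1 := by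
        rw [real_inner_self_eq_norm_mul_norm, hy1]; norm_num
      have expand : (inner ℝ (Real.sin a • z + Real.sin b • x - Real.sin (a + b) • y)
          (Real.sin a • z + Real.sin b • x - Real.sin (a + b) • y) : ℝ) = 0 := by
        simp only [inner_sub_left, inner_sub_right, inner_add_left, inner_add_right,
          real_inner_smul_left, real_inner_smul_right]
        have e1 : (inner ℝ z x : ℝ) = Real.cos (a + b) := by rw [real_inner_comm x z, hcab]
        have e2 : (inner ℝ z y : ℝ) = Real.cos b := by rw [real_inner_comm y z, hcb]
        have e3 : (inner ℝ y x : ℝ) = Real.cos a := by rw [real_inner_comm x y, hca]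
        rw [hzz, hxx, hyy, e1, e2, e3, ← hca, ← hcb, ← hcab, Real.sin_add, Real.cos_add]
        linear_combination (-(Real.sin a ^ 2)) * Real.sin_sq_add_cos_sq b +
          (-(Real.sin b ^ 2)) * Real.sin_sq_add_cos_sq a
      have h0 := inner_self_eq_zero.mp expand
      exact sub_eq_zero.mp h0
    rcases eq_or_lt_of_le hsa0 with hsa | hsa
    · -- sin a = 0
      have ha' : a = 0 ∨ a = π := by
        by_contra hcon
        push_neg at hcon
        have h1 : 0 < a := ha0.lt_of_ne (Ne.symm hcon.1)
        have h2 : a < π := lt_of_le_of_ne haπ hcon.2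
        have := Real.sin_pos_of_pos_of_lt_pi h1 h2
        linarith
      rcases ha' with h0 | hπ
      · have h1 : (inner ℝ x y : ℝ) = 1 := by rw [← hca, h0, Real.cos_zero]
        exact absurd ((inner_eq_one_iff_of_norm_eq_one hx1 hy1).mp h1) hxy
      · have hxyneg : (inner ℝ x y : ℝ) = -1 := by rw [← hca, hπ, Real.cos_pi]
        have hb0' : b = 0 := le_antisymm (by linarith) hb0
        have hyz' : y = z := by
          have h1 : (inner ℝ y z : ℝ) = 1 := by rw [← hcb, hb0', Real.cos_zero]
          exact (inner_eq_one_iff_of_norm_eq_one hy1 hz1).mp h1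
        have hzx : z = -x := by
          have hnz : ‖x + y‖ ^ 2 = 0 := by
            rw [norm_add_sq_real, hx1, hy1, hxyneg]; ring
          have h2 : x + y = 0 := norm_eq_zero.mp (pow_eq_zero_iff two_ne_zero |>.mp hnz)
          rw [← hyz', eq_neg_iff_add_eq_zero, add_comm]
          exact h2
        have hL1 : fderiv ℝ F x z = -(F x) := by
          rw [hzx, (fderiv ℝ F x).map_neg, euler hF hx0]
        have hL2 : fderiv ℝ F y z = F z := by
          rw [hyz', euler hF hz0]
        rw [hL1, hL2]
        have := hF.pos x hx0
        have := hF.pos z hz0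
        linarith
    · -- 0 < sin a
      have hone : 0 < Real.sin (a + b) ∨ 0 < Real.sin b := by
        by_contra hcon
        push_neg at hcon
        have hsab' : Real.sin (a + b) = 0 := le_antisymm hcon.1 hsab0
        have hsb' : Real.sin b = 0 := le_antisymm hcon.2 hsb0
        have hab' : a + b = 0 ∨ a + b = π := by
          by_contra hc2
          push_neg at hc2
          have h1 : 0 < a + b := hab0.lt_of_ne (Ne.symm hc2.1)
          have h2 : a + b < π := lt_of_le_of_ne habπ hc2.2
          have := Real.sin_pos_of_pos_of_lt_pi h1 h2
          linarith
        have hbv : b = 0 ∨ b = π := by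
          by_contra hc2
          push_neg at hc2
          have h1 : 0 < b := hb0.lt_of_ne (Ne.symm hc2.1)
          have h2 : b < π := lt_of_le_of_ne hbπ hc2.2
          have := Real.sin_pos_of_pos_of_lt_pi h1 h2
          linarith
        have hpi := Real.pi_pos
        rcases hab' with h1 | h1
        · have ha' : a = 0 := by linarith
          rw [ha', Real.sin_zero] at hsa
          linarith
        · rcases hbv with h2 | h2
          · have ha' : a = π := by linarith
            rw [ha', Real.sin_pi] at hsa
            linarith
          · have ha' : a = 0 := by linarith
            rw [ha', Real.sin_zero] at hsa
            linarith
      have P1 : fderiv ℝ F x y < F y := by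
        apply support_lt hF hx0 hy0
        intro μ hμ he
        apply hxy
        have h2 := congrArg norm he
        rw [hy1, norm_smul, hx1, mul_one, Real.norm_eq_abs, abs_of_pos hμ] at h2
        rw [he, ← h2, one_smul]
      have P2 : fderiv ℝ F y x < F x := by
        apply support_lt hF hy0 hx0
        intro μ hμ he
        apply hxy
        have h2 := congrArg norm he
        rw [hx1, norm_smul, hy1, mul_one, Real.norm_eq_abs, abs_of_pos hμ] at h2
        rw [he, ← h2, one_smul]
      have Lxkey : Real.sin a * fderiv ℝ F x z + Real.sin b * F x
          = Real.sin (a + b) * fderiv ℝ F x y := by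
        have h := congrArg (fun w : Euc n => fderiv ℝ F x w) key
        simp only [ContinuousLinearMap.map_add, ContinuousLinearMap.map_smul,
          smul_eq_mul] at h
        rw [euler hF hx0] at h
        exact h
      have Lykey : Real.sin a * fderiv ℝ F y z + Real.sin b * fderiv ℝ F y x
          = Real.sin (a + b) * F y := by
        have h := congrArg (fun w : Euc n => fderiv ℝ F y w) key
        simp only [ContinuousLinearMap.map_add, ContinuousLinearMap.map_smul,
          smul_eq_mul] at h
        rw [euler hF hy0] at h
        exact h
      have hgoal : Real.sin a * fderiv ℝ F x z < Real.sin a * fderiv ℝ F y z := by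
        rcases hone with h | h
        · nlinarith [mul_nonneg hsb0 (sub_pos.mpr P2).le, mul_pos h (sub_pos.mpr P1)]
        · nlinarith [mul_nonneg hsab0 (sub_pos.mpr P1).le, mul_pos h (sub_pos.mpr P2)]
      exact (mul_lt_mul_iff_right₀ hsa).mp hgoal
  rw [hgr x, hgr y]
  exact ⟨hlt.le, ⟨fun he => absurd he hlt.ne, fun he => absurd he hxy⟩⟩
end
end

section
/- Let F be a smooth Minkowski norm on ℝ^{n+1}, E_{n+1} the last coordinate vector, and ω₀ ∈ (−F(E_{n+1}), F(−E_{n+1})). Define E_{n+1}^F = −Φ(−E_{n+1})/F(−E_{n+1}) if ω₀ > 0, E_{n+1}^F = Φ(E_{n+1})/F(E_{n+1}) if ω₀ < 0, and E_{n+1}^F = E_{n+1} if ω₀ = 0, where Φ = DF|_{𝕊ⁿ}. Then F(z) + ω₀⟨z, E_{n+1}^F⟩ > 0 for every z ∈ 𝕊ⁿ. -/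
open MeasureTheory Metric Real Filter

noncomputable section

/-- The last coordinate vector `E_{n+1}`. -/
def lastVec (n : ℕ) : Euc n := EuclideanSpace.single (Fin.last n) 1

/-- The constant vector `E_{n+1}^F` determined by `ω₀` and the Cahn-Hoffman map. -/
def EF {n : ℕ} (F : Euc n → ℝ) (ω₀ : ℝ) : Euc n :=
  if 0 < ω₀ then -(F (-(lastVec n)))⁻¹ • CH F (-(lastVec n))
  else if ω₀ < 0 then (F (lastVec n))⁻¹ • CH F (lastVec n)
  else lastVec n

namespace CapillaryAux

variable {n : ℕ} {F : Euc n → ℝ}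

lemma diffAtF (hF : IsMinkowskiNorm n F) {x : Euc n} (hx : x ≠ 0) :
    DifferentiableAt ℝ F x :=
  (hF.smooth.contDiffAt (isOpen_compl_singleton.mem_nhds hx)).differentiableAt (by simp)

lemma euler (hF : IsMinkowskiNorm n F) {w : Euc n} (hw : w ≠ 0) :
    fderiv ℝ F w w = F w := by
  have hd := (diffAtF hF hw).hasFDerivAt
  have hline : HasDerivAt (fun t : ℝ => t • w) w 1 := by
    simpa using (hasDerivAt_id (1 : ℝ)).smul_const w
  have hd' : HasFDerivAt F (fderiv ℝ F w) ((1 : ℝ) • w) := by rw [one_smul]; exact hd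
  have hL : HasDerivAt (fun t : ℝ => F (t • w)) (fderiv ℝ F w w) 1 :=
    hd'.comp_hasDerivAt 1 hline
  have hR : HasDerivAt (fun t : ℝ => F (t • w)) (F w) 1 := by
    have hbase : HasDerivAt (fun t : ℝ => t * F w) (F w) 1 := by
      simpa using (hasDerivAt_id (1 : ℝ)).mul_const (F w)
    apply hbase.congr_of_eventuallyEq
    filter_upwards [Ioi_mem_nhds (zero_lt_one : (0 : ℝ) < 1)] with t ht
    exact hF.homog t ht w
  exact hL.unique hR

lemma hasFDerivG (hF : IsMinkowskiNorm n F) {w : Euc n} (hw : w ≠ 0) :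
    HasFDerivAt (fun x => F x ^ 2 / 2) (F w • fderiv ℝ F w) w := by
  have hd := (diffAtF hF hw).hasFDerivAt
  have h1 : HasFDerivAt (fun x => F x * F x)
      (F w • fderiv ℝ F w + F w • fderiv ℝ F w) w := hd.mul hd
  have h2 := h1.const_mul ((1 : ℝ) / 2)
  have hfun : (fun x => F x ^ 2 / 2) = fun x => (1 : ℝ) / 2 * (F x * F x) := by
    funext x; ring
  rw [hfun]
  refine h2.congr_fderiv ?_
  ext v
  simp only [ContinuousLinearMap.smul_apply, ContinuousLinearMap.add_apply, smul_eq_mul]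
  ring

lemma smoothG (hF : IsMinkowskiNorm n F) :
    ContDiffOn ℝ (⊤ : ℕ∞) (fun x => F x ^ 2 / 2) {(0 : Euc n)}ᶜ :=
  (hF.smooth.pow 2).div_const 2

/-- Convexity inequality along a segment avoiding the origin. -/
lemma conv_ineq (hF : IsMinkowskiNorm n F) {w z : Euc n}
    (hseg : ∀ s : ℝ, s ∈ Set.Icc (0 : ℝ) 1 → w + s • (z - w) ≠ 0) :
    F w ^ 2 / 2 + fderiv ℝ (fun x => F x ^ 2 / 2) w (z - w) ≤ F z ^ 2 / 2 := by
  rcases eq_or_ne z w with rfl | hzw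
  · simp
  set v : Euc n := z - w with hv
  have hvne : v ≠ 0 := sub_ne_zero.2 hzw
  set γ : ℝ → Euc n := fun s => w + s • v with hγ
  set g : Euc n → ℝ := fun y => fderiv ℝ (fun x => F x ^ 2 / 2) y v with hg
  have hγd : ∀ s : ℝ, HasDerivAt γ v s := by
    intro s
    simpa [hγ] using ((hasDerivAt_id s).smul_const v).const_add w
  have hcd : ∀ s ∈ Set.Icc (0 : ℝ) 1, ContDiffAt ℝ (⊤ : ℕ∞) (fun x => F x ^ 2 / 2) (γ s) := by
    intro s hs
    exact (smoothG hF).contDiffAt (isOpen_compl_singleton.mem_nhds (hseg s hs))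
  have hh : ∀ s ∈ Set.Icc (0 : ℝ) 1,
      HasDerivAt (fun s => F (γ s) ^ 2 / 2) (g (γ s)) s := by
    intro s hs
    have hG := ((hcd s hs).differentiableAt (by simp)).hasFDerivAt
    exact hG.comp_hasDerivAt s (hγd s)
  have hg' : ∀ s ∈ Set.Icc (0 : ℝ) 1,
      HasDerivAt (fun s => g (γ s)) (fderiv ℝ g (γ s) v) s := by
    intro s hs
    have h1 : ContDiffAt ℝ 1 (fderiv ℝ (fun x => F x ^ 2 / 2)) (γ s) :=
      (hcd s hs).fderiv_right (by exact WithTop.coe_le_coe.mpr (le_top : ((1 + 1 : ℕ) : ℕ∞) ≤ ⊤))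
    have h2 : DifferentiableAt ℝ g (γ s) :=
      (h1.differentiableAt one_ne_zero).clm_apply (differentiableAt_const v)
    exact h2.hasFDerivAt.comp_hasDerivAt s (hγd s)
  have hpos : ∀ s ∈ Set.Icc (0 : ℝ) 1, 0 < fderiv ℝ g (γ s) v :=
    fun s hs => hF.conv (γ s) (hseg s hs) v hvne
  have hmono : StrictMonoOn (fun s => g (γ s)) (Set.Icc 0 1) := by
    apply strictMonoOn_of_deriv_pos (convex_Icc 0 1)
    · exact fun s hs => ((hg' s hs).continuousAt).continuousWithinAt
    · intro s hs
      rw [interior_Icc] at hs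
      rw [(hg' s (Set.mem_Icc_of_Ioo hs)).deriv]
      exact hpos s (Set.mem_Icc_of_Ioo hs)
  obtain ⟨c, hc, hc'⟩ := exists_hasDerivAt_eq_slope (fun s => F (γ s) ^ 2 / 2)
    (fun s => g (γ s)) (zero_lt_one)
    (fun s hs => (hh s hs).continuousAt.continuousWithinAt)
    (fun s hs => hh s (Set.mem_Icc_of_Ioo hs))
  have h01 : g (γ 0) < g (γ c) :=
    hmono (Set.left_mem_Icc.2 zero_le_one) (Set.mem_Icc_of_Ioo hc) hc.1
  have hγ0 : γ 0 = w := by simp [hγ]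
  have hγ1 : γ 1 = z := by simp [hγ, hv]
  rw [hγ0] at h01
  rw [hγ1, hγ0] at hc'
  have hc'' : g (γ c) = F z ^ 2 / 2 - F w ^ 2 / 2 := by
    rw [hc']; ring
  have : g w < F z ^ 2 / 2 - F w ^ 2 / 2 := hc'' ▸ h01
  have hgw : g w = fderiv ℝ (fun x => F x ^ 2 / 2) w (z - w) := rfl
  linarith [hgw ▸ this]

/-- Key inequality: `DF(w) z ≤ F z`. -/
lemma key (hF : IsMinkowskiNorm n F) {w z : Euc n} (hw : w ≠ 0) (hz : z ≠ 0) :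
    fderiv ℝ F w z ≤ F z := by
  have hFz := hF.pos z hz
  have hFw := hF.pos w hw
  by_cases hle : fderiv ℝ F w z ≤ 0
  · linarith
  push_neg at hle
  set f : ℝ := fderiv ℝ F w z with hf
  set c : ℝ := F w / F z with hc
  have hcpos : 0 < c := div_pos hFw hFz
  set z' : Euc n := c • z with hz'
  have hFz' : F z' = F w := by
    rw [hz', hF.homog c hcpos z, hc]
    field_simp
  have hfw : fderiv ℝ F w w = F w := euler hF hw
  have hfz' : fderiv ℝ F w z' = c * f := by
    rw [hz', ContinuousLinearMap.map_smul, smul_eq_mul, hf]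
  have hcf : 0 < c * f := mul_pos hcpos hle
  have hseg : ∀ s : ℝ, s ∈ Set.Icc (0 : ℝ) 1 → w + s • (z' - w) ≠ 0 := by
    intro s hs habs
    have h0 : fderiv ℝ F w (w + s • (z' - w)) = 0 := by rw [habs, map_zero]
    rw [map_add, ContinuousLinearMap.map_smul, map_sub, hfz', hfw, smul_eq_mul] at h0
    have hs0 := hs.1
    have hs1 := hs.2
    have hA : s * (c * f) ≤ 0 := by nlinarith
    have hB : 0 ≤ s * (c * f) := mul_nonneg hs0 hcf.le
    have hAB : s * (c * f) = 0 := le_antisymm hA hB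
    have hs' : s = 0 := by
      rcases mul_eq_zero.1 hAB with h | h
      · exact h
      · exact absurd h hcf.ne'
    rw [hs'] at h0
    simp at h0
    exact hFw.ne' h0
  have hconv := conv_ineq hF hseg
  have hGd : fderiv ℝ (fun x => F x ^ 2 / 2) w = F w • fderiv ℝ F w :=
    (hasFDerivG hF hw).fderiv
  rw [hGd, hFz'] at hconv
  have happ : (F w • fderiv ℝ F w) (z' - w) = F w * (c * f - F w) := by
    simp only [ContinuousLinearMap.smul_apply, map_sub, hfz', hfw, smul_eq_mul]; ring
  rw [happ] at hconv
  have h2 : c * f ≤ F w := by nlinarith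
  have h3 : F w * f ≤ F w * F z := by
    rw [hc] at h2
    have := mul_le_mul_of_nonneg_right h2 hFz.le
    calc F w * f = F w / F z * f * F z := by field_simp
    _ ≤ F w * F z := this
  exact le_of_mul_le_mul_left h3 hFw

lemma inner_CH (F : Euc n → ℝ) (w z : Euc n) :
    (inner ℝ z (CH F w) : ℝ) = fderiv ℝ F w z := by
  rw [CH, real_inner_comm, gradient]
  exact InnerProductSpace.toDual_symm_apply

lemma lastVec_ne (n : ℕ) : lastVec n ≠ 0 := by
  intro h
  have : ‖lastVec n‖ = 1 := by
    rw [lastVec, EuclideanSpace.norm_single]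
    simp
  rw [h] at this
  simp at this

end CapillaryAux

open CapillaryAux in
theorem capillary_positivity {n : ℕ} (F : Euc n → ℝ)
    (hF : IsMinkowskiNorm n F) (ω₀ : ℝ)
    (hω : ω₀ ∈ Set.Ioo (-(F (lastVec n))) (F (-(lastVec n)))) :
    ∀ z ∈ sphere (0 : Euc n) 1, 0 < F z + ω₀ * (inner ℝ z (EF F ω₀) : ℝ) := by
  intro z hz
  have hznorm : ‖z‖ = 1 := by simpa using mem_sphere_zero_iff_norm.mp hz
  have hzne : z ≠ 0 := by
    intro h; rw [h] at hznorm; simp at hznorm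
  have hFz : 0 < F z := hF.pos z hzne
  have hE : lastVec n ≠ 0 := lastVec_ne n
  have hEneg : -(lastVec n) ≠ 0 := neg_ne_zero.2 hE
  rcases lt_trichotomy ω₀ 0 with hω0 | hω0 | hω0
  · -- ω₀ < 0
    have hFE : 0 < F (lastVec n) := hF.pos _ hE
    rw [EF, if_neg (by linarith), if_pos hω0]
    rw [real_inner_smul_right, inner_CH]
    set a : ℝ := fderiv ℝ F (lastVec n) z with ha
    have hkey : a ≤ F z := key hF hE hzne
    have hval : F z + ω₀ * ((F (lastVec n))⁻¹ * a)
        = (F (lastVec n) * F z + ω₀ * a) / F (lastVec n) := by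
      field_simp
    rw [hval]
    apply div_pos _ hFE
    have h1 : ω₀ * F z ≤ ω₀ * a := mul_le_mul_of_nonpos_left hkey hω0.le
    nlinarith [mul_pos (by linarith [hω.1] : 0 < F (lastVec n) + ω₀) hFz]
  · -- ω₀ = 0
    rw [hω0]
    simpa using hFz
  · -- 0 < ω₀
    have hFm : 0 < F (-(lastVec n)) := hF.pos _ hEneg
    rw [EF, if_pos hω0]
    rw [real_inner_smul_right, inner_CH]
    set a : ℝ := fderiv ℝ F (-(lastVec n)) z with ha
    have hkey : a ≤ F z := key hF hEneg hzne
    have hval : F z + ω₀ * (-(F (-(lastVec n)))⁻¹ * a)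
        = (F (-(lastVec n)) * F z - ω₀ * a) / F (-(lastVec n)) := by
      field_simp
      ring
    rw [hval]
    apply div_pos _ hFm
    have h1 : ω₀ * a ≤ ω₀ * F z := mul_le_mul_of_nonneg_left hkey hω0.le
    have h2 : ω₀ * F z < F (-(lastVec n)) * F z := mul_lt_mul_of_pos_right hω.2 hFz
    linarith
end
end

section
/- Let F be a smooth Minkowski norm on ℝ^{n+1}, ω₀ ∈ (−F(E_{n+1}), F(−E_{n+1})), and E_{n+1}^F as defined from ω₀ and the Cahn-Hoffman map. Then the function F̃(ξ) = F(ξ) + ω₀⟨ξ, E_{n+1}^F⟩ is itself a smooth Minkowski norm on ℝ^{n+1}, and D²F̃ = D²F everywhere away from 0. -/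
open MeasureTheory Metric Real Filter

noncomputable section

namespace MinkAux

variable {n : ℕ} {F : Euc n → ℝ}

lemma mem_compl {ξ : Euc n} (hξ : ξ ≠ 0) : {(0 : Euc n)}ᶜ ∈ nhds ξ :=
  isOpen_compl_singleton.mem_nhds (by simpa using hξ)

lemma cdAt (hF : IsMinkowskiNorm n F) {ξ : Euc n} (hξ : ξ ≠ 0) : ContDiffAt ℝ (⊤ : ℕ∞) F ξ :=
  hF.smooth.contDiffAt (mem_compl hξ)

lemma dAt (hF : IsMinkowskiNorm n F) {ξ : Euc n} (hξ : ξ ≠ 0) : DifferentiableAt ℝ F ξ :=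
  (cdAt hF hξ).differentiableAt (by simp)

lemma dAt2 (hF : IsMinkowskiNorm n F) {ξ : Euc n} (hξ : ξ ≠ 0) :
    DifferentiableAt ℝ (fderiv ℝ F) ξ :=
  (((cdAt hF hξ).fderiv_right (m := 1) ((by exact WithTop.coe_le_coe.mpr le_top))).differentiableAt one_ne_zero)

lemma euler1 (hF : IsMinkowskiNorm n F) {ξ : Euc n} (hξ : ξ ≠ 0) :
    fderiv ℝ F ξ ξ = F ξ := by
  have hline : HasDerivAt (fun t : ℝ => t • ξ) ξ 1 := by
    simpa using (hasDerivAt_id (1 : ℝ)).smul_const ξ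
  have hpt : HasFDerivAt F (fderiv ℝ F ξ) ((1 : ℝ) • ξ) := by
    rw [one_smul]; exact (dAt hF hξ).hasFDerivAt
  have h1 : HasDerivAt (fun t : ℝ => F (t • ξ)) (fderiv ℝ F ξ ξ) 1 := by
    have := hpt.comp_hasDerivAt (1 : ℝ) hline
    exact this
  have heq : (fun t : ℝ => F (t • ξ)) =ᶠ[nhds (1 : ℝ)] fun t => t * F ξ := by
    filter_upwards [eventually_gt_nhds one_pos] with t ht
    exact hF.homog t ht ξ
  have h2 : HasDerivAt (fun t : ℝ => t * F ξ) (fderiv ℝ F ξ ξ) 1 :=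
    h1.congr_of_eventuallyEq heq.symm
  have h3 : HasDerivAt (fun t : ℝ => t * F ξ) (F ξ) 1 := by
    simpa using (hasDerivAt_id (1 : ℝ)).mul_const (F ξ)
  exact h2.unique h3

lemma fderiv_homog_s8 (hF : IsMinkowskiNorm n F) {ξ : Euc n} (hξ : ξ ≠ 0) {t : ℝ} (ht : 0 < t) :
    fderiv ℝ F (t • ξ) = fderiv ℝ F ξ := by
  have htξ : t • ξ ≠ 0 := smul_ne_zero ht.ne' hξ
  have hc : HasFDerivAt (fun x : Euc n => t • x)
      (t • ContinuousLinearMap.id ℝ (Euc n)) ξ :=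
    ((ContinuousLinearMap.id ℝ (Euc n)).hasFDerivAt (x := ξ)).const_smul t
  have h1 : HasFDerivAt (fun x : Euc n => F (t • x))
      ((fderiv ℝ F (t • ξ)).comp (t • ContinuousLinearMap.id ℝ (Euc n))) ξ :=
    (dAt hF htξ).hasFDerivAt.comp ξ hc
  have h2 : HasFDerivAt (fun x : Euc n => F (t • x)) (t • fderiv ℝ F ξ) ξ := by
    have hmul : HasFDerivAt (fun x : Euc n => t * F x) (t • fderiv ℝ F ξ) ξ :=
      (dAt hF hξ).hasFDerivAt.const_mul t
    apply hmul.congr_of_eventuallyEq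
    filter_upwards [mem_compl hξ] with y hy
    exact hF.homog t ht y
  have hkey := h1.unique h2
  ext w
  have h3 := ContinuousLinearMap.ext_iff.1 hkey w
  simp only [ContinuousLinearMap.coe_comp', Function.comp_apply,
    ContinuousLinearMap.smul_apply, ContinuousLinearMap.coe_smul',
    ContinuousLinearMap.coe_id', Pi.smul_apply, id_eq, smul_eq_mul] at h3
  rw [(fderiv ℝ F (t • ξ)).map_smul, smul_eq_mul] at h3
  exact mul_left_cancel₀ ht.ne' h3

lemma euler2 (hF : IsMinkowskiNorm n F) {ξ : Euc n} (hξ : ξ ≠ 0) :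
    fderiv ℝ (fderiv ℝ F) ξ ξ = 0 := by
  have hline : HasDerivAt (fun t : ℝ => t • ξ) ξ 1 := by
    simpa using (hasDerivAt_id (1 : ℝ)).smul_const ξ
  have hpt : HasFDerivAt (fderiv ℝ F) (fderiv ℝ (fderiv ℝ F) ξ) ((1 : ℝ) • ξ) := by
    rw [one_smul]; exact (dAt2 hF hξ).hasFDerivAt
  have h1 : HasDerivAt (fun t : ℝ => fderiv ℝ F (t • ξ)) (fderiv ℝ (fderiv ℝ F) ξ ξ) 1 := by
    have := hpt.comp_hasDerivAt (1 : ℝ) hline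
    exact this
  have heq : (fun t : ℝ => fderiv ℝ F (t • ξ)) =ᶠ[nhds (1 : ℝ)]
      fun _ => fderiv ℝ F ξ := by
    filter_upwards [eventually_gt_nhds one_pos] with t ht
    exact fderiv_homog_s8 hF hξ ht
  have h2 : HasDerivAt (fun _ : ℝ => fderiv ℝ F ξ) (fderiv ℝ (fderiv ℝ F) ξ ξ) 1 :=
    h1.congr_of_eventuallyEq heq.symm
  exact h2.unique (hasDerivAt_const _ _)

lemma symm2 (hF : IsMinkowskiNorm n F) {ξ : Euc n} (hξ : ξ ≠ 0) (v w : Euc n) :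
    fderiv ℝ (fderiv ℝ F) ξ v w = fderiv ℝ (fderiv ℝ F) ξ w v := by
  apply second_derivative_symmetric_of_eventually (f := F) (f' := fderiv ℝ F)
  · filter_upwards [mem_compl hξ] with y hy
    exact (dAt hF (by simpa using hy)).hasFDerivAt
  · exact (dAt2 hF hξ).hasFDerivAt

lemma fderiv_apply_clm {f : Euc n → ℝ} {ξ : Euc n} (hd : DifferentiableAt ℝ (fderiv ℝ f) ξ)
    (v w : Euc n) :
    fderiv ℝ (fun y => fderiv ℝ f y v) ξ w = fderiv ℝ (fderiv ℝ f) ξ w v := by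
  have h : HasFDerivAt (fun y => fderiv ℝ f y v)
      ((ContinuousLinearMap.apply ℝ ℝ v).comp (fderiv ℝ (fderiv ℝ f) ξ)) ξ :=
    ((ContinuousLinearMap.apply ℝ ℝ v).hasFDerivAt).comp ξ hd.hasFDerivAt
  rw [h.fderiv]; rfl

lemma dAt2v (hF : IsMinkowskiNorm n F) {ξ : Euc n} (hξ : ξ ≠ 0) (v : Euc n) :
    DifferentiableAt ℝ (fun y => fderiv ℝ F y v) ξ :=
  (ContinuousLinearMap.apply ℝ ℝ v).differentiableAt.comp ξ (dAt2 hF hξ)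

lemma sq_half_fderiv (hF : IsMinkowskiNorm n F) {ξ : Euc n} (hξ : ξ ≠ 0) (v : Euc n) :
    fderiv ℝ (fun y => fderiv ℝ (fun x => F x ^ 2 / 2) y v) ξ v
      = fderiv ℝ F ξ v * fderiv ℝ F ξ v + F ξ * fderiv ℝ (fderiv ℝ F) ξ v v := by
  have key : ∀ y : Euc n, y ≠ 0 →
      fderiv ℝ (fun x => F x ^ 2 / 2) y v = F y * fderiv ℝ F y v := by
    intro y hy
    have h0 : HasFDerivAt (fun x => F x ^ 2 / 2) (F y • fderiv ℝ F y) y := by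
      have hm := ((dAt hF hy).hasFDerivAt.mul (dAt hF hy).hasFDerivAt).const_mul (2⁻¹ : ℝ)
      have hfn : (fun x : Euc n => F x ^ 2 / 2) = fun x => 2⁻¹ * (F x * F x) := by
        funext x; ring
      rw [hfn]
      refine hm.congr_fderiv ?_
      ext w; simp; ring
    rw [h0.fderiv]; simp
  have heq : (fun y => fderiv ℝ (fun x => F x ^ 2 / 2) y v) =ᶠ[nhds ξ]
      fun y => F y * fderiv ℝ F y v := by
    filter_upwards [mem_compl hξ] with y hy
    rw [key y (by simpa using hy)]
  rw [heq.fderiv_eq]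
  rw [fderiv_fun_mul (dAt hF hξ) (dAt2v hF hξ v)]
  simp only [ContinuousLinearMap.add_apply, ContinuousLinearMap.smul_apply, smul_eq_mul]
  rw [fderiv_apply_clm (dAt2 hF hξ) v v]
  ring

lemma D2_pos (hF : IsMinkowskiNorm n F) {ξ : Euc n} (hξ : ξ ≠ 0) {v : Euc n}
    (hv : v ≠ (fderiv ℝ F ξ v / F ξ) • ξ) :
    0 < fderiv ℝ (fderiv ℝ F) ξ v v := by
  set c : ℝ := fderiv ℝ F ξ v / F ξ with hc
  set w : Euc n := v - c • ξ with hwdef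
  have hw : w ≠ 0 := sub_ne_zero.mpr hv
  have hFξ : 0 < F ξ := hF.pos ξ hξ
  have hconv := hF.conv ξ hξ w hw
  rw [sq_half_fderiv hF hξ w] at hconv
  have hDw : fderiv ℝ F ξ w = 0 := by
    have h1 : fderiv ℝ F ξ w = fderiv ℝ F ξ v - c * F ξ := by
      rw [hwdef, map_sub, _root_.map_smul, euler1 hF hξ, smul_eq_mul]
    rw [h1, hc]; field_simp; ring
  rw [hDw] at hconv
  have hww : fderiv ℝ (fderiv ℝ F) ξ w w = fderiv ℝ (fderiv ℝ F) ξ v v := by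
    have hξ0 : (fderiv ℝ (fderiv ℝ F) ξ) ξ = 0 := euler2 hF hξ
    have hvξ : fderiv ℝ (fderiv ℝ F) ξ v ξ = 0 := by
      rw [symm2 hF hξ v ξ, hξ0]; rfl
    rw [hwdef]
    simp only [map_sub, _root_.map_smul, hξ0, ContinuousLinearMap.sub_apply,
      ContinuousLinearMap.smul_apply, ContinuousLinearMap.zero_apply, smul_eq_mul,
      smul_zero, hvξ]
    ring
  rw [hww] at hconv
  nlinarith

lemma D2_nonneg (hF : IsMinkowskiNorm n F) {ξ : Euc n} (hξ : ξ ≠ 0) (v : Euc n) :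
    0 ≤ fderiv ℝ (fderiv ℝ F) ξ v v := by
  by_cases hv : v = (fderiv ℝ F ξ v / F ξ) • ξ
  · rw [hv, _root_.map_smul]
    simp [euler2 hF hξ]
  · exact (D2_pos hF hξ hv).le

/-- Fundamental inequality: `DF(z)[ξ] ≤ F(ξ)`. -/
lemma fund_ineq (hF : IsMinkowskiNorm n F) {z ξ : Euc n} (hz : z ≠ 0) (hξ : ξ ≠ 0) :
    fderiv ℝ F z ξ ≤ F ξ := by
  by_cases hpar : ∃ c : ℝ, c < 0 ∧ ξ = c • z
  · obtain ⟨c, hc, rfl⟩ := hpar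
    have h1 : fderiv ℝ F z (c • z) = c * F z := by
      rw [_root_.map_smul, euler1 hF hz, smul_eq_mul]
    have h2 : 0 < F (c • z) := hF.pos _ (smul_ne_zero hc.ne hz)
    nlinarith [hF.pos z hz]
  · -- the ray `z + t • ξ`, `t ≥ 0`, avoids the origin
    have hray : ∀ t : ℝ, 0 ≤ t → z + t • ξ ≠ 0 := by
      intro t ht h0
      rcases eq_or_lt_of_le ht with h | h
      · apply hz; simpa [← h] using h0
      · apply hpar
        refine ⟨-t⁻¹, by simp [h, inv_pos.mpr h], ?_⟩
        have h6 : t • ξ = -z := by linear_combination (norm := module) h0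
        have h7 := congrArg (fun x => t⁻¹ • x) h6
        simp only [smul_smul, inv_mul_cancel₀ h.ne', one_smul, smul_neg] at h7
        rw [h7]
        module
    set g : ℝ → ℝ := fun t => F (z + t • ξ) with hg
    set g1 : ℝ → ℝ := fun t => fderiv ℝ F (z + t • ξ) ξ with hg1
    have hgd : ∀ t : ℝ, 0 ≤ t → HasDerivAt g (g1 t) t := by
      intro t ht
      have hline : HasDerivAt (fun s : ℝ => z + s • ξ) ξ t := by
        simpa using ((hasDerivAt_id t).smul_const ξ).const_add z
      exact (dAt hF (hray t ht)).hasFDerivAt.comp_hasDerivAt t hline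
    have hg1d : ∀ t : ℝ, 0 ≤ t →
        HasDerivAt g1 (fderiv ℝ (fderiv ℝ F) (z + t • ξ) ξ ξ) t := by
      intro t ht
      have hline : HasDerivAt (fun s : ℝ => z + s • ξ) ξ t := by
        simpa using ((hasDerivAt_id t).smul_const ξ).const_add z
      have hcomp : HasFDerivAt (fun y => fderiv ℝ F y ξ)
          ((ContinuousLinearMap.apply ℝ ℝ ξ).comp (fderiv ℝ (fderiv ℝ F) (z + t • ξ)))
          (z + t • ξ) :=
        ((ContinuousLinearMap.apply ℝ ℝ ξ).hasFDerivAt).comp _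
          (dAt2 hF (hray t ht)).hasFDerivAt
      exact hcomp.comp_hasDerivAt t hline
    -- g1 is monotone on [0, ∞)
    have hg1mono : MonotoneOn g1 (Set.Ici (0 : ℝ)) := by
      apply monotoneOn_of_deriv_nonneg (convex_Ici 0)
      · intro t ht
        exact (hg1d t ht).continuousAt.continuousWithinAt
      · intro t ht
        rw [interior_Ici] at ht
        exact (hg1d t ht.le).differentiableAt.differentiableWithinAt
      · intro t ht
        rw [interior_Ici] at ht
        rw [(hg1d t ht.le).deriv]
        exact D2_nonneg hF (hray t ht.le) ξ
    -- MVT: g1 0 ≤ (g t - g 0) / t for t > 0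
    have hslope : ∀ t : ℝ, 0 < t → g1 0 ≤ (g t - g 0) / t := by
      intro t ht
      obtain ⟨c, hc, hceq⟩ := exists_hasDerivAt_eq_slope g g1 ht
        (fun s hs => (hgd s hs.1).continuousAt.continuousWithinAt)
        (fun s hs => hgd s hs.1.le)
      rw [sub_zero] at hceq
      rw [← hceq]
      exact hg1mono (Set.self_mem_Ici) (Set.mem_Ici.mpr hc.1.le) hc.1.le
    -- rewrite the slope using homogeneity
    have hbound : ∀ t : ℝ, 0 < t →
        fderiv ℝ F z ξ ≤ F (t⁻¹ • z + ξ) - t⁻¹ * F z := by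
      intro t ht
      have h1 := hslope t ht
      have h2 : g t = t * F (t⁻¹ • z + ξ) := by
        have : z + t • ξ = t • (t⁻¹ • z + ξ) := by
          rw [smul_add, smul_smul, mul_inv_cancel₀ ht.ne', one_smul]
        rw [hg]; simp only; rw [this, hF.homog t ht]
      have h3 : g 0 = F z := by simp [hg]
      have h4 : g1 0 = fderiv ℝ F z ξ := by simp [hg1]
      rw [h2, h3, h4] at h1
      calc fderiv ℝ F z ξ ≤ (t * F (t⁻¹ • z + ξ) - F z) / t := h1
        _ = F (t⁻¹ • z + ξ) - t⁻¹ * F z := by field_simp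
    -- take the limit t → ∞
    have hlim : Tendsto (fun t : ℝ => F (t⁻¹ • z + ξ) - t⁻¹ * F z) atTop (nhds (F ξ)) := by
      have hinv : Tendsto (fun t : ℝ => t⁻¹) atTop (nhds 0) := tendsto_inv_atTop_zero
      have harg : Tendsto (fun t : ℝ => t⁻¹ • z + ξ) atTop (nhds ξ) := by
        have := (hinv.smul_const z).add_const ξ
        simpa using this
      have hcont : ContinuousAt F ξ := (dAt hF hξ).continuousAt
      have h1 := hcont.tendsto.comp harg
      have h2 : Tendsto (fun t : ℝ => t⁻¹ * F z) atTop (nhds 0) := by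
        simpa using hinv.mul_const (F z)
      simpa using h1.sub h2
    refine ge_of_tendsto hlim ?_
    filter_upwards [eventually_gt_atTop (0 : ℝ)] with t ht
    exact hbound t ht

lemma lastVec_ne (n : ℕ) : lastVec n ≠ 0 := by
  intro h
  have : ‖lastVec n‖ = 1 := by
    simp [lastVec, EuclideanSpace.norm_single]
  rw [h] at this; simp at this

lemma inner_CH (hF : IsMinkowskiNorm n F) {z : Euc n} (hz : z ≠ 0) (ξ : Euc n) :
    (inner ℝ ξ (CH F z) : ℝ) = fderiv ℝ F z ξ := by
  rw [real_inner_comm]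
  simp only [CH, gradient]
  exact InnerProductSpace.toDual_symm_apply

/-- Positivity of the tilted norm. -/
lemma tilde_pos (hF : IsMinkowskiNorm n F) (ω₀ : ℝ)
    (hω : ω₀ ∈ Set.Ioo (-(F (lastVec n))) (F (-(lastVec n)))) {ξ : Euc n} (hξ : ξ ≠ 0) :
    0 < F ξ + ω₀ * (inner ℝ ξ (EF F ω₀) : ℝ) := by
  have he : lastVec n ≠ 0 := lastVec_ne n
  have hne : -(lastVec n) ≠ 0 := neg_ne_zero.mpr he
  have hFξ : 0 < F ξ := hF.pos ξ hξ
  rcases lt_trichotomy ω₀ 0 with hneg | hzero | hpos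
  · -- ω₀ < 0 : EF = (F e)⁻¹ • CH F e
    have hEF : EF F ω₀ = (F (lastVec n))⁻¹ • CH F (lastVec n) := by
      rw [EF, if_neg (by linarith), if_pos hneg]
    have hFe : 0 < F (lastVec n) := hF.pos _ he
    have ha : fderiv ℝ F (lastVec n) ξ ≤ F ξ := fund_ineq hF he hξ
    rw [hEF, real_inner_smul_right, inner_CH hF he]
    set a := fderiv ℝ F (lastVec n) ξ
    have hr : -1 < ω₀ / F (lastVec n) := by
      rw [neg_lt, ← neg_div]
      exact (div_lt_one hFe).mpr (by linarith [hω.1])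
    have hr0 : ω₀ / F (lastVec n) < 0 := div_neg_of_neg_of_pos hneg hFe
    have : ω₀ * ((F (lastVec n))⁻¹ * a) = (ω₀ / F (lastVec n)) * a := by ring
    rw [this]
    rcases le_or_gt a 0 with h | h
    · nlinarith
    · nlinarith
  · simpa [hzero] using hFξ
  · -- ω₀ > 0 : EF = -(F (-e))⁻¹ • CH F (-e)
    have hEF : EF F ω₀ = -(F (-(lastVec n)))⁻¹ • CH F (-(lastVec n)) := by
      rw [EF, if_pos hpos]
    have hFe : 0 < F (-(lastVec n)) := hF.pos _ hne
    have ha : fderiv ℝ F (-(lastVec n)) ξ ≤ F ξ := fund_ineq hF hne hξ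
    rw [hEF, real_inner_smul_right, inner_CH hF hne]
    set a := fderiv ℝ F (-(lastVec n)) ξ
    have hr : ω₀ / F (-(lastVec n)) < 1 := by
      exact (div_lt_one hFe).mpr (by linarith [hω.2])
    have hr0 : 0 < ω₀ / F (-(lastVec n)) := div_pos hpos hFe
    have : ω₀ * (-(F (-(lastVec n)))⁻¹ * a) = -((ω₀ / F (-(lastVec n))) * a) := by ring
    rw [this]
    rcases le_or_gt a 0 with h | h
    · nlinarith
    · nlinarith

end MinkAux

open MinkAux in
set_option maxHeartbeats 1000000 in
/-- `F̃(ξ) = F(ξ) + ω₀⟨ξ, E_{n+1}^F⟩` is again a smooth Minkowski norm, with the same second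
derivative as `F` away from the origin. -/
theorem tilted_norm_is_minkowski {n : ℕ} (F : Euc n → ℝ)
    (hF : IsMinkowskiNorm n F) (ω₀ : ℝ)
    (hω : ω₀ ∈ Set.Ioo (-(F (lastVec n))) (F (-(lastVec n)))) :
    IsMinkowskiNorm n (fun ξ => F ξ + ω₀ * (inner ℝ ξ (EF F ω₀) : ℝ)) ∧
    ∀ ξ : Euc n, ξ ≠ 0 →
      fderiv ℝ (fderiv ℝ (fun ζ => F ζ + ω₀ * (inner ℝ ζ (EF F ω₀) : ℝ))) ξ
        = fderiv ℝ (fderiv ℝ F) ξ := by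
  set E : Euc n := EF F ω₀ with hE
  set L : Euc n →L[ℝ] ℝ := ω₀ • innerSL ℝ E with hLdef
  have hLval : ∀ ξ : Euc n, L ξ = ω₀ * (inner ℝ ξ E : ℝ) := by
    intro ξ
    rw [hLdef]
    simp only [ContinuousLinearMap.smul_apply, innerSL_apply_apply, smul_eq_mul]
    rw [real_inner_comm]
  have hfun : (fun ξ : Euc n => F ξ + ω₀ * (inner ℝ ξ E : ℝ)) = fun ξ => F ξ + L ξ := by
    funext ξ; rw [hLval]
  have hpos : ∀ ξ : Euc n, ξ ≠ 0 → 0 < F ξ + ω₀ * (inner ℝ ξ E : ℝ) := fun ξ hξ =>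
    tilde_pos hF ω₀ hω hξ
  clear_value L
  clear_value E
  -- derivative of the tilted norm
  have hDtilde : ∀ y : Euc n, y ≠ 0 →
      HasFDerivAt (fun ξ : Euc n => F ξ + L ξ) (fderiv ℝ F y + L) y := fun y hy =>
    (dAt hF hy).hasFDerivAt.add L.hasFDerivAt
  have hfderiv : ∀ y : Euc n, y ≠ 0 →
      fderiv ℝ (fun ξ : Euc n => F ξ + L ξ) y = fderiv ℝ F y + L := fun y hy =>
    (hDtilde y hy).fderiv
  constructor
  · constructor
    · simp [hF.zero]
    · exact hpos
    · intro t ht ξ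
      rw [hF.homog t ht, real_inner_smul_left]
      ring
    · rw [hfun]
      exact hF.smooth.add L.contDiff.contDiffOn
    · -- convexity
      intro ξ hξ v hv
      simp only [← hLval]
      have hFξ : 0 < F ξ := hF.pos ξ hξ
      have hpξ : 0 < F ξ + L ξ := by rw [hLval]; exact hpos ξ hξ
      -- inner derivative computation
      have key : ∀ y : Euc n, y ≠ 0 →
          fderiv ℝ (fun x => (F x + L x) ^ 2 / 2) y v
            = (F y + L y) * (fderiv ℝ F y v + L v) := by
        intro y hy
        have h0 : HasFDerivAt (fun x => (F x + L x) ^ 2 / 2)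
            ((F y + L y) • (fderiv ℝ F y + L)) y := by
          have hm := ((hDtilde y hy).mul (hDtilde y hy)).const_mul (2⁻¹ : ℝ)
          have hfn : (fun x : Euc n => (F x + L x) ^ 2 / 2)
              = fun x => 2⁻¹ * ((F x + L x) * (F x + L x)) := by
            funext x; ring
          rw [hfn]
          refine hm.congr_fderiv ?_
          ext w; simp; ring
        rw [h0.fderiv]; simp; ring
      have heq : (fun y => fderiv ℝ (fun x => (F x + L x) ^ 2 / 2) y v) =ᶠ[nhds ξ]
          fun y => (F y + L y) * (fderiv ℝ F y v + L v) := by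
        filter_upwards [mem_compl hξ] with y hy
        rw [key y (by simpa using hy)]
      rw [heq.fderiv_eq]
      have hd1 : DifferentiableAt ℝ (fun y : Euc n => F y + L y) ξ :=
        (dAt hF hξ).add L.differentiableAt
      have hd2 : DifferentiableAt ℝ (fun y : Euc n => fderiv ℝ F y v + L v) ξ :=
        (dAt2v hF hξ v).add_const (L v)
      rw [fderiv_fun_mul hd1 hd2]
      simp only [ContinuousLinearMap.add_apply, ContinuousLinearMap.smul_apply, smul_eq_mul]
      have e1 : fderiv ℝ (fun y : Euc n => fderiv ℝ F y v + L v) ξ v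
          = fderiv ℝ (fderiv ℝ F) ξ v v := by
        rw [fderiv_add_const]
        exact fderiv_apply_clm (dAt2 hF hξ) v v
      have e2 : fderiv ℝ (fun y : Euc n => F y + L y) ξ v = fderiv ℝ F ξ v + L v := by
        rw [hfderiv ξ hξ]; rfl
      rw [e1, e2]
      by_cases hpar0 : v = (fderiv ℝ F ξ v / F ξ) • ξ
      · -- v is parallel to ξ
        obtain ⟨c, hpar⟩ : ∃ c : ℝ, v = c • ξ := ⟨_, hpar0⟩
        have hc0 : c ≠ 0 := fun h => hv (by rw [hpar, h, zero_smul])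
        have hA0 : fderiv ℝ (fderiv ℝ F) ξ v v = 0 := by
          rw [hpar, _root_.map_smul]
          simp [euler2 hF hξ]
        have hDv : fderiv ℝ F ξ v = c * F ξ := by
          conv_lhs => rw [hpar]
          rw [_root_.map_smul, euler1 hF hξ, smul_eq_mul]
        have hLv : L v = c * L ξ := by
          conv_lhs => rw [hpar]
          rw [_root_.map_smul, smul_eq_mul]
        rw [hA0, hDv, hLv]
        have hcc : 0 < (c * (F ξ + L ξ)) * (c * (F ξ + L ξ)) :=
          mul_self_pos.mpr (mul_ne_zero hc0 hpξ.ne')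
        have h9 : c * F ξ + c * L ξ = c * (F ξ + L ξ) := by ring
        rw [h9, mul_zero, zero_add]
        exact hcc
      · have hApos : 0 < fderiv ℝ (fderiv ℝ F) ξ v v := D2_pos hF hξ hpar0
        exact add_pos_of_pos_of_nonneg (mul_pos hpξ hApos) (mul_self_nonneg _)
  · -- second derivatives agree
    intro ξ hξ
    have heq : fderiv ℝ (fun ζ : Euc n => F ζ + ω₀ * (inner ℝ ζ E : ℝ)) =ᶠ[nhds ξ]
        fun y => fderiv ℝ F y + L := by
      filter_upwards [mem_compl hξ] with y hy
      rw [hfun]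
      exact hfderiv y (by simpa using hy)
    rw [heq.fderiv_eq, fderiv_add_const]
end
end

section
/- Let K ⊂ ℝ^{n+1} be an unbounded closed convex set containing the origin, F a smooth Minkowski norm with Wulff balls 𝒲^F_R = {F^o < R}. Then for each fixed r ≥ 0, the function R ↦ |𝒲^F_{r+R} ∩ K| / R^{n+1} is non-increasing in R ∈ (0, ∞). -/
open MeasureTheory Metric Real Filter Pointwise Module

noncomputable section

lemma dualNorm_smul {n : ℕ} (F : Euc n → ℝ) {t : ℝ} (ht : 0 < t) (x : Euc n) :
    dualNorm F (t • x) = t * dualNorm F x := by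
  have himg : (fun z => (inner ℝ (t • x) z : ℝ) / F z) '' sphere (0 : Euc n) 1
      = t • ((fun z => (inner ℝ x z : ℝ) / F z) '' sphere (0 : Euc n) 1) := by
    rw [← Set.image_smul, ← Set.image_comp]
    refine Set.image_congr fun z _ => ?_
    have h : (inner ℝ (t • x) z : ℝ) = t * inner ℝ x z := real_inner_smul_left x z t
    simp only [h, smul_eq_mul, mul_div_assoc]
    rfl
  rw [dualNorm, himg, Real.sSup_smul_of_nonneg ht.le, smul_eq_mul, dualNorm]

lemma sphere_subset_compl {n : ℕ} : sphere (0 : Euc n) 1 ⊆ {(0 : Euc n)}ᶜ := by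
  intro z hz
  simp only [mem_sphere_iff_norm, sub_zero] at hz
  simp only [Set.mem_compl_iff, Set.mem_singleton_iff]
  intro h; rw [h, norm_zero] at hz; norm_num at hz

lemma bounded_sublevel {n : ℕ} (F : Euc n → ℝ) (hF : IsMinkowskiNorm n F) (c : ℝ) :
    Bornology.IsBounded {x : Euc n | dualNorm F x < c} := by
  have hsph : IsCompact (sphere (0 : Euc n) 1) := isCompact_sphere _ _
  have hne : (sphere (0 : Euc n) 1).Nonempty := NormedSpace.sphere_nonempty.2 zero_le_one
  have hcont : ContinuousOn F (sphere (0 : Euc n) 1) :=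
    (hF.smooth.continuousOn).mono sphere_subset_compl
  obtain ⟨zM, hzM, hM⟩ := hsph.exists_isMaxOn hne hcont
  obtain ⟨zm, hzm, hm⟩ := hsph.exists_isMinOn hne hcont
  have hzm0 : zm ≠ 0 := fun h => by
    have := sphere_subset_compl hzm; simp [h] at this
  have hmpos : 0 < F zm := hF.pos _ hzm0
  have hMpos : 0 < F zM := hF.pos _ (fun h => by
    have := sphere_subset_compl hzM; simp [h] at this)
  -- every x in the sublevel set has ‖x‖ ≤ max 0 c * F zM
  have key : ∀ x : Euc n, dualNorm F x < c → ‖x‖ ≤ max 0 c * F zM := by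
    intro x hx
    rcases eq_or_ne x 0 with rfl | hx0
    · simpa using mul_nonneg (le_max_left 0 c) hMpos.le
    have hxn : 0 < ‖x‖ := norm_pos_iff.2 hx0
    set z : Euc n := ‖x‖⁻¹ • x with hzdef
    have hz : z ∈ sphere (0 : Euc n) 1 := by
      simp [hzdef, norm_smul, abs_of_nonneg (inv_nonneg.2 hxn.le), inv_mul_cancel₀ hxn.ne']
    have hz0 : z ≠ 0 := fun h => by
      have := sphere_subset_compl hz; simp [h] at this
    have hFz : 0 < F z := hF.pos _ hz0
    have hinner : (inner ℝ x z : ℝ) = ‖x‖ := by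
      rw [hzdef, real_inner_smul_right, real_inner_self_eq_norm_sq]
      field_simp
    have hBdd : BddAbove ((fun z => (inner ℝ x z : ℝ) / F z) '' sphere (0 : Euc n) 1) := by
      refine ⟨‖x‖ / F zm, ?_⟩
      rintro _ ⟨w, hw, rfl⟩
      have hFw : 0 < F w := hF.pos _ (fun h => by
        have := sphere_subset_compl hw; simp [h] at this)
      rcases le_or_gt (inner ℝ x w : ℝ) 0 with h | h
      · exact le_trans (div_nonpos_of_nonpos_of_nonneg h hFw.le) (by positivity)
      · refine div_le_div₀ (norm_nonneg x) ?_ hmpos (hm hw)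
        have hw1 : ‖w‖ = 1 := by simpa using mem_sphere_iff_norm.1 hw
        calc (inner ℝ x w : ℝ) ≤ ‖x‖ * ‖w‖ := real_inner_le_norm x w
          _ = ‖x‖ := by rw [hw1, mul_one]
    have hle : ‖x‖ / F z ≤ dualNorm F x := by
      refine le_csSup hBdd ⟨z, hz, ?_⟩
      show (inner ℝ x z : ℝ) / F z = ‖x‖ / F z
      rw [hinner]
    have h1 : ‖x‖ ≤ dualNorm F x * F z := (div_le_iff₀ hFz).1 hle
    have hd0 : 0 ≤ dualNorm F x := le_trans (by positivity) hle
    calc ‖x‖ ≤ dualNorm F x * F z := h1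
      _ ≤ max 0 c * F zM := by
          refine mul_le_mul (le_trans hx.le (le_max_right 0 c)) (hM hz) hFz.le
            (le_max_left 0 c)
  refine (Metric.isBounded_closedBall (x := (0 : Euc n)) (r := max 0 c * F zM)).subset ?_
  intro x hx
  simpa [Metric.mem_closedBall, dist_eq_norm] using key x hx

/-- Monotonicity of the Wulff-ball volume ratio in an unbounded closed convex set containing
the origin: for each fixed `r ≥ 0`, `R ↦ |𝒲^F_{r+R} ∩ K| / R^{n+1}` is non-increasing. -/
theorem wulff_volume_ratio_antitone {n : ℕ} (F : Euc n → ℝ)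
    (hF : IsMinkowskiNorm n F) (K : Set (Euc n))
    (hKcl : IsClosed K) (hKconv : Convex ℝ K) (hKunbd : ¬ Bornology.IsBounded K)
    (h0K : (0 : Euc n) ∈ K) (r : ℝ) (hr : 0 ≤ r) :
    AntitoneOn
      (fun R => (volume ({x : Euc n | dualNorm F x < r + R} ∩ K)).toReal / R ^ (n + 1))
      (Set.Ioi 0) := by
  intro R₁ hR₁ R₂ hR₂ h12
  simp only [Set.mem_Ioi] at hR₁ hR₂
  set W₁ := {x : Euc n | dualNorm F x < r + R₁} ∩ K with hW₁
  set W₂ := {x : Euc n | dualNorm F x < r + R₂} ∩ K with hW₂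
  set lam := R₁ / R₂ with hlam
  have hlam0 : 0 < lam := div_pos hR₁ hR₂
  have hlam1 : lam ≤ 1 := (div_le_one hR₂).2 h12
  -- scaling inclusion
  have hsub : lam • W₂ ⊆ W₁ := by
    rintro _ ⟨x, ⟨hx1, hx2⟩, rfl⟩
    constructor
    · have : dualNorm F (lam • x) = lam * dualNorm F x := dualNorm_smul F hlam0 x
      rw [Set.mem_setOf_eq, this]
      calc lam * dualNorm F x < lam * (r + R₂) := by
            exact mul_lt_mul_of_pos_left hx1 hlam0
        _ = lam * r + R₁ := by rw [hlam]; field_simp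
        _ ≤ r + R₁ := by nlinarith
    · have := hKconv h0K hx2 (a := 1 - lam) (b := lam) (by linarith) hlam0.le (by ring)
      simpa using this
  -- finiteness
  have hfin : ∀ c : ℝ, volume ({x : Euc n | dualNorm F x < c} ∩ K) < ⊤ := by
    intro c
    obtain ⟨Rb, hRb⟩ := ((bounded_sublevel F hF c).subset_closedBall 0)
    refine lt_of_le_of_lt (measure_mono ?_) (isCompact_closedBall (0 : Euc n) Rb).measure_lt_top
    exact fun x hx => hRb hx.1
  have hfin1 : volume W₁ ≠ ⊤ := (hfin (r + R₁)).ne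
  have hfin2 : volume W₂ ≠ ⊤ := (hfin (r + R₂)).ne
  -- measure scaling
  have hdim : finrank ℝ (Euc n) = n + 1 := by
    simp [finrank_euclideanSpace]
  have hscale : volume (lam • W₂) = ENNReal.ofReal (lam ^ (n + 1)) * volume W₂ := by
    rw [Measure.addHaar_smul_of_nonneg volume hlam0.le W₂, hdim]
  have hmeas : ENNReal.ofReal (lam ^ (n + 1)) * volume W₂ ≤ volume W₁ := by
    rw [← hscale]; exact measure_mono hsub
  have hreal : lam ^ (n + 1) * (volume W₂).toReal ≤ (volume W₁).toReal := by
    have := ENNReal.toReal_mono hfin1 hmeas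
    rwa [ENNReal.toReal_mul, ENNReal.toReal_ofReal (by positivity)] at this
  -- conclude
  have hp1 : (0:ℝ) < R₁ ^ (n + 1) := by positivity
  have hp2 : (0:ℝ) < R₂ ^ (n + 1) := by positivity
  rw [div_le_div_iff₀ hp2 hp1]
  have hlp : lam ^ (n + 1) = R₁ ^ (n + 1) / R₂ ^ (n + 1) := by
    rw [hlam, div_pow]
  rw [hlp] at hreal
  have h2nn : 0 ≤ (volume W₂).toReal := ENNReal.toReal_nonneg
  have hkey := mul_le_mul_of_nonneg_right hreal hp2.le
  have hcanc : R₁ ^ (n + 1) / R₂ ^ (n + 1) * (volume W₂).toReal * R₂ ^ (n + 1)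
      = (volume W₂).toReal * R₁ ^ (n + 1) := by field_simp
  rw [hcanc] at hkey
  exact hkey
end
end

section
/- Distance-to-Wulff-ball sublevel sets in a convex set: Let K ⊂ ℝ^{n+1} be an unbounded closed convex set containing the origin, F a smooth Minkowski norm, F_*(ξ) = F(−ξ), and define d_{F_*}(y, A) = inf{r > 0 : closure(𝒲^{F_*}_r(y)) ∩ A ≠ ∅} for y ∈ K and closed A ⊆ K. Then for every r, R > 0, {y ∈ K : d_{F_*}(y, closure(𝒲^F_r ∩ K)) ≤ R} = closure(𝒲^F_{r+R} ∩ K). -/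
open MeasureTheory Metric Real Filter

noncomputable section

/-- The anisotropic distance `d_{F_*}(y, A) = inf{r > 0 : closure(𝒲^{F_*}_r(y)) ∩ A ≠ ∅}`. -/
def wulffDist {n : ℕ} (F : Euc n → ℝ) (y : Euc n) (A : Set (Euc n)) : ℝ :=
  sInf {r : ℝ | 0 < r ∧
    (closure {x : Euc n | dualNorm (fun ξ => F (-ξ)) (x - y) < r} ∩ A).Nonempty}

/- ### Auxiliary lemmas -/

section Aux

variable {n : ℕ}

lemma sphere_ne_zero {z : Euc n} (hz : z ∈ sphere (0 : Euc n) 1) : z ≠ 0 := by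
  intro h
  simp [h] at hz

lemma sphere_nonempty' : (sphere (0 : Euc n) 1).Nonempty :=
  NormedSpace.sphere_nonempty.mpr zero_le_one

/-- Existence of a positive lower bound for `F` on the unit sphere. -/
lemma exists_sphere_lb (F : Euc n → ℝ) (hF : IsMinkowskiNorm n F) :
    ∃ m : ℝ, 0 < m ∧ ∀ z ∈ sphere (0 : Euc n) 1, m ≤ F z := by
  have hcont : ContinuousOn F (sphere (0 : Euc n) 1) :=
    (hF.smooth.continuousOn).mono (fun z hz => sphere_ne_zero hz)
  obtain ⟨z0, hz0, hz0min⟩ :=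
    (isCompact_sphere (0 : Euc n) 1).exists_isMinOn sphere_nonempty' hcont
  exact ⟨F z0, hF.pos z0 (sphere_ne_zero hz0), fun z hz => hz0min hz⟩

variable {F : Euc n → ℝ} {m : ℝ}

lemma dn_bddAbove (hm : 0 < m) (hFm : ∀ z ∈ sphere (0 : Euc n) 1, m ≤ F z) (x : Euc n) :
    ∀ a ∈ (fun z => (inner ℝ x z : ℝ) / F z) '' sphere (0 : Euc n) 1, a ≤ ‖x‖ / m := by
  rintro a ⟨z, hz, rfl⟩
  have h1 : (inner ℝ x z : ℝ) ≤ ‖x‖ := by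
    have := real_inner_le_norm x z
    rwa [mem_sphere_zero_iff_norm.mp hz, mul_one] at this
  exact div_le_div₀ (norm_nonneg x) h1 hm (hFm z hz)

lemma dn_bddAbove' (hm : 0 < m) (hFm : ∀ z ∈ sphere (0 : Euc n) 1, m ≤ F z) (x : Euc n) :
    BddAbove ((fun z => (inner ℝ x z : ℝ) / F z) '' sphere (0 : Euc n) 1) :=
  ⟨‖x‖ / m, dn_bddAbove hm hFm x⟩

lemma dn_le (hm : 0 < m) (hFm : ∀ z ∈ sphere (0 : Euc n) 1, m ≤ F z) (x : Euc n) :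
    dualNorm F x ≤ ‖x‖ / m :=
  csSup_le (sphere_nonempty'.image _) (dn_bddAbove hm hFm x)

lemma dn_zero (hm : 0 < m) (hFm : ∀ z ∈ sphere (0 : Euc n) 1, m ≤ F z) :
    dualNorm F (0 : Euc n) = 0 := by
  have h := dn_le hm hFm (0 : Euc n)
  have h2 : (0 : ℝ) ≤ dualNorm F 0 := by
    obtain ⟨z, hz⟩ := sphere_nonempty' (n := n)
    have h3 : (0:ℝ) = (inner ℝ (0 : Euc n) z : ℝ) / F z := by simp
    rw [h3]
    exact le_csSup (dn_bddAbove' hm hFm 0) (Set.mem_image_of_mem _ hz)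
  simp only [norm_zero, zero_div] at h
  linarith

lemma dn_add (hm : 0 < m) (hFm : ∀ z ∈ sphere (0 : Euc n) 1, m ≤ F z) (x y : Euc n) :
    dualNorm F (x + y) ≤ dualNorm F x + dualNorm F y := by
  apply csSup_le (sphere_nonempty'.image _)
  rintro a ⟨z, hz, rfl⟩
  show (inner ℝ (x + y) z : ℝ) / F z ≤ dualNorm F x + dualNorm F y
  have h1 : (inner ℝ (x + y) z : ℝ) / F z
      = (inner ℝ x z : ℝ) / F z + (inner ℝ y z : ℝ) / F z := by
    rw [inner_add_left, add_div]
  rw [h1]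
  exact add_le_add
    (le_csSup (dn_bddAbove' hm hFm x) (Set.mem_image_of_mem _ hz))
    (le_csSup (dn_bddAbove' hm hFm y) (Set.mem_image_of_mem _ hz))

lemma dn_smul (hm : 0 < m) (hFm : ∀ z ∈ sphere (0 : Euc n) 1, m ≤ F z)
    {t : ℝ} (ht : 0 ≤ t) (x : Euc n) :
    dualNorm F (t • x) = t * dualNorm F x := by
  rcases eq_or_lt_of_le ht with h | h
  · simp [← h, dn_zero hm hFm]
  have key : ∀ (s : ℝ), 0 < s → ∀ w : Euc n,
      dualNorm F (s • w) ≤ s * dualNorm F w := by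
    intro s hs w
    apply csSup_le (sphere_nonempty'.image _)
    rintro a ⟨z, hz, rfl⟩
    show (inner ℝ (s • w) z : ℝ) / F z ≤ s * dualNorm F w
    have : (inner ℝ (s • w) z : ℝ) / F z = s * ((inner ℝ w z : ℝ) / F z) := by
      rw [real_inner_smul_left, mul_div_assoc]
    rw [this]
    exact mul_le_mul_of_nonneg_left
      (le_csSup (dn_bddAbove' hm hFm w) (Set.mem_image_of_mem _ hz)) hs.le
  have h1 := key t h x
  have h2 := key t⁻¹ (inv_pos.mpr h) (t • x)
  rw [smul_smul, inv_mul_cancel₀ h.ne', one_smul] at h2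
  have h3 : t * dualNorm F x ≤ dualNorm F (t • x) := by
    have := mul_le_mul_of_nonneg_left h2 h.le
    rwa [← mul_assoc, mul_inv_cancel₀ h.ne', one_mul] at this
  linarith

lemma dn_continuous (hm : 0 < m) (hFm : ∀ z ∈ sphere (0 : Euc n) 1, m ≤ F z) :
    Continuous (dualNorm F) := by
  have key : ∀ a b : Euc n, dualNorm F a - dualNorm F b ≤ dist a b / m := by
    intro a b
    have h1 : dualNorm F a ≤ dualNorm F (a - b) + dualNorm F b := by
      have := dn_add hm hFm (a - b) b
      rwa [sub_add_cancel] at this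
    have h2 := dn_le hm hFm (a - b)
    rw [dist_eq_norm]
    linarith
  apply (LipschitzWith.of_dist_le_mul (K := ⟨m⁻¹, inv_nonneg.mpr hm.le⟩)
    (f := dualNorm F) ?_).continuous
  intro a b
  rw [Real.dist_eq, abs_le]
  have := key a b
  have := key b a
  rw [dist_comm b a] at this
  constructor
  · have : dist a b / m = m⁻¹ * dist a b := by ring
    push_cast
    change -(m⁻¹ * dist a b) ≤ dualNorm F a - dualNorm F b
    nlinarith [key b a, dist_comm b a, dist_nonneg (x := a) (y := b)]
  · push_cast
    have h := key a b
    rw [div_eq_inv_mul] at h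
    exact h

/-- Reflection identity: `dualNorm (F ∘ -) w = dualNorm F (-w)`. -/
lemma dn_neg (F : Euc n → ℝ) (w : Euc n) :
    dualNorm (fun ξ => F (-ξ)) w = dualNorm F (-w) := by
  unfold dualNorm
  congr 1
  ext a
  constructor
  · rintro ⟨z, hz, rfl⟩
    refine ⟨-z, by simpa using hz, ?_⟩
    simp [inner_neg_neg]
  · rintro ⟨z, hz, rfl⟩
    refine ⟨-z, by simpa using hz, ?_⟩
    simp [inner_neg_left, inner_neg_right]

end Aux

/-- Sublevel sets of the `F_*`-distance to a truncated Wulff ball inside an unbounded closed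
convex set `K` containing the origin:
`{y ∈ K : d_{F_*}(y, closure(𝒲^F_r ∩ K)) ≤ R} = closure(𝒲^F_{r+R} ∩ K)`. -/
theorem wulff_distance_sublevel {n : ℕ} (F : Euc n → ℝ)
    (hF : IsMinkowskiNorm n F) (K : Set (Euc n))
    (hKcl : IsClosed K) (hKconv : Convex ℝ K) (hKunbd : ¬ Bornology.IsBounded K)
    (h0K : (0 : Euc n) ∈ K) (r R : ℝ) (hr : 0 < r) (hR : 0 < R) :
    {y ∈ K | wulffDist F y (closure ({x : Euc n | dualNorm F x < r} ∩ K)) ≤ R}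
      = closure ({x : Euc n | dualNorm F x < r + R} ∩ K) := by
  obtain ⟨m, hm, hFm⟩ := exists_sphere_lb F hF
  set G := dualNorm F with hG
  have hGcont : Continuous G := dn_continuous hm hFm
  have hG0 : G 0 = 0 := dn_zero hm hFm
  -- the reflected dual norm
  have hrefl : ∀ x y : Euc n, dualNorm (fun ξ => F (-ξ)) (x - y) = G (y - x) := by
    intro x y
    rw [dn_neg, neg_sub]
  -- closure of sublevel sets
  have hsub : ∀ (c : Euc n) (ρ : ℝ),
      closure {x : Euc n | dualNorm (fun ξ => F (-ξ)) (x - c) < ρ}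
        ⊆ {x : Euc n | G (c - x) ≤ ρ} := by
    intro c ρ
    apply closure_minimal
    · intro x hx
      simp only [Set.mem_setOf_eq] at hx ⊢
      rw [hrefl x c] at hx
      exact hx.le
    · exact isClosed_le (hGcont.comp (continuous_const.sub continuous_id)) continuous_const
  -- membership in the closure of a truncated Wulff ball
  have hmemcl : ∀ (ρ : ℝ), 0 < ρ → ∀ x : Euc n, x ∈ K → G x ≤ ρ →
      x ∈ closure ({x : Euc n | G x < ρ} ∩ K) := by
    intro ρ hρ x hxK hxρ
    have htend : Tendsto (fun t : ℝ => t • x) (nhdsWithin 1 (Set.Iio 1)) (nhds x) := by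
      have h1 : Tendsto (fun t : ℝ => t • x) (nhds 1) (nhds ((1 : ℝ) • x)) :=
        (continuous_id.smul continuous_const).tendsto 1
      rw [one_smul] at h1
      exact h1.mono_left nhdsWithin_le_nhds
    refine mem_closure_of_tendsto htend ?_
    have hIoo : Set.Ioo (0 : ℝ) 1 ∈ nhdsWithin (1 : ℝ) (Set.Iio 1) :=
      Ioo_mem_nhdsLT_of_mem ⟨zero_lt_one, le_refl 1⟩
    filter_upwards [hIoo] with t ht
    refine ⟨?_, ?_⟩
    · simp only [Set.mem_setOf_eq]
      rw [hG, dn_smul hm hFm ht.1.le]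
      nlinarith [ht.1, ht.2, hxρ, hρ]
    · exact hKconv.smul_mem_of_zero_mem h0K hxK ⟨ht.1.le, ht.2.le⟩
  set A := closure ({x : Euc n | G x < r} ∩ K) with hA
  have h0A : (0 : Euc n) ∈ A := subset_closure ⟨by simp [Set.mem_setOf_eq, hG0, hr], h0K⟩
  have hAsub : A ⊆ {x : Euc n | G x ≤ r} ∩ K := by
    rw [hA]
    have : IsClosed ({x : Euc n | G x ≤ r} ∩ K) :=
      (isClosed_le hGcont continuous_const).inter hKcl
    refine closure_minimal ?_ this
    intro x hx
    simp only [Set.mem_inter_iff, Set.mem_setOf_eq] at hx ⊢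
    exact ⟨hx.1.le, hx.2⟩
  ext y
  simp only [Set.mem_setOf_eq, Set.mem_sep_iff]
  constructor
  · rintro ⟨hyK, hyd⟩
    -- wulffDist ≤ R implies G y ≤ r + R
    set S := {ρ : ℝ | 0 < ρ ∧
      (closure {x : Euc n | dualNorm (fun ξ => F (-ξ)) (x - y) < ρ} ∩ A).Nonempty} with hS
    have hSbdd : BddBelow S := ⟨0, fun ρ hρ => hρ.1.le⟩
    have hSne : S.Nonempty := by
      refine ⟨‖y‖ / m + 1, by positivity, ⟨0, ?_, h0A⟩⟩
      apply subset_closure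
      simp only [Set.mem_setOf_eq, zero_sub]
      calc dualNorm (fun ξ => F (-ξ)) (-y) = G y := by rw [dn_neg, neg_neg]
        _ ≤ ‖y‖ / m := dn_le hm hFm y
        _ < ‖y‖ / m + 1 := lt_add_one _
    have key : ∀ ε : ℝ, 0 < ε → G y ≤ r + R + ε := by
      intro ε hε
      have : sInf S < R + ε := lt_of_le_of_lt hyd (by linarith)
      obtain ⟨ρ, hρS, hρlt⟩ := (csInf_lt_iff hSbdd hSne).mp this
      obtain ⟨x, hx1, hx2⟩ := hρS.2
      have hxA := hAsub hx2
      have h1 : G (y - x) ≤ ρ := hsub y ρ hx1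
      have h2 : G y ≤ G (y - x) + G x := by
        have := dn_add hm hFm (y - x) x
        rwa [sub_add_cancel] at this
      have h3 : G x ≤ r := hxA.1
      linarith
    have hGy : G y ≤ r + R := le_of_forall_pos_le_add key
    exact hmemcl (r + R) (by linarith) y hyK hGy
  · intro hy
    have hy' : G y ≤ r + R ∧ y ∈ K := by
      have : IsClosed ({x : Euc n | G x ≤ r + R} ∩ K) :=
        (isClosed_le hGcont continuous_const).inter hKcl
      have h2 : closure ({x : Euc n | G x < r + R} ∩ K)
          ⊆ {x : Euc n | G x ≤ r + R} ∩ K := by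
        refine closure_minimal ?_ this
        intro x hx
        simp only [Set.mem_inter_iff, Set.mem_setOf_eq] at hx ⊢
        exact ⟨hx.1.le, hx.2⟩
      exact h2 hy
    obtain ⟨hGy, hyK⟩ := hy'
    refine ⟨hyK, ?_⟩
    -- exhibit a point x ∈ A with G (y - x) ≤ R
    obtain ⟨x, hxA, hxd⟩ : ∃ x, x ∈ A ∧ G (y - x) ≤ R := by
      by_cases hcase : G y ≤ r
      · exact ⟨y, hmemcl r hr y hyK hcase, by simp [sub_self, hG0, hR.le]⟩
      · push_neg at hcase
        have hGypos : 0 < G y := lt_trans hr hcase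
        set t := r / G y with ht
        have ht0 : 0 < t := div_pos hr hGypos
        have ht1 : t < 1 := (div_lt_one hGypos).mpr hcase
        refine ⟨t • y, ?_, ?_⟩
        · apply hmemcl r hr
          · exact hKconv.smul_mem_of_zero_mem h0K hyK ⟨ht0.le, ht1.le⟩
          · rw [hG, dn_smul hm hFm ht0.le, ht, div_mul_cancel₀ _ hGypos.ne']
        · have : y - t • y = (1 - t) • y := by
            rw [sub_smul, one_smul]
          rw [this, hG, dn_smul hm hFm (by linarith : (0:ℝ) ≤ 1 - t), ht]
          have : (1 - r / G y) * G y = G y - r := by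
            field_simp
          rw [this]
          linarith
    -- conclude wulffDist ≤ R
    apply le_of_forall_pos_le_add
    intro ε hε
    have hmem : R + ε ∈ {ρ : ℝ | 0 < ρ ∧
        (closure {x : Euc n | dualNorm (fun ξ => F (-ξ)) (x - y) < ρ} ∩ A).Nonempty} := by
      refine ⟨by linarith, ⟨x, ?_, hxA⟩⟩
      apply subset_closure
      simp only [Set.mem_setOf_eq]
      rw [hrefl x y]
      linarith
    exact csInf_le ⟨0, fun ρ hρ => hρ.1.le⟩ hmem
end
end
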